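/- Let f : W → ℝ² be continuously differentiable on W homeomorphic to D², and suppose det(J_f(w)) > 0 for all w ∈ W. Then for any regular value p ∈ ℝ² \ f(∂W), the cardinality of f⁻¹(p) equals the winding number of f(∂W) around p. In particular f⁻¹(p) is finite. -/

import Mathlib

/-!
At a preimage `w` of `p`, write `Df(w) u = a u + b ū`; positivity of the Jacobian
`|a|² - |b|²` makes `(f z - p) / (a (z - w))` have positive real part near `w`. Hence the
preimages are isolated, so finitely many, and `f - p` can be written as `G · ∏ (z - w)` near
`∂W`, with `G` continuous and zero-free on `W` (near each `w` the factor `z - w` is replaced by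
`(f - p) / a`). As `W` is simply connected, `G = exp Λ`, so along `∂W` the argument of
`f - p` is that of `exp Λ`, which returns to its initial value, plus those of the `z - w`,
each of which winds once.
-/

open Set Metric

/-- `IsWindingNumber γ p n` : the loop `γ` (parametrized on `[0,1]`) winds `n` times
around `p`, expressed via a continuous choice of argument. -/
def IsWindingNumber (γ : ℝ → ℂ) (p : ℂ) (n : ℤ) : Prop :=
  ∃ θ : ℝ → ℝ, ContinuousOn θ (Set.Icc 0 1) ∧
    (∀ t ∈ Set.Icc (0:ℝ) 1,
      γ t - p = (‖γ t - p‖ : ℂ) * Complex.exp ((θ t : ℂ) * Complex.I)) ∧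
    θ 1 - θ 0 = 2 * Real.pi * n

open Complex ComplexConjugate Filter Topology

namespace IsWindingNumber

variable {γ γ' : ℝ → ℂ} {p : ℂ} {m n : ℤ}

theorem congr (h : IsWindingNumber γ p n) (hγ : EqOn γ γ' (Icc 0 1)) :
    IsWindingNumber γ' p n := by
  obtain ⟨θ, hθc, hθ, hθn⟩ := h
  exact ⟨θ, hθc, fun t ht => hγ ht ▸ hθ t ht, hθn⟩

theorem mul (h : IsWindingNumber γ 0 m) (h' : IsWindingNumber γ' 0 n) :
    IsWindingNumber (γ * γ') 0 (m + n) := by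
  obtain ⟨θ, hθc, hθ, hθm⟩ := h
  obtain ⟨θ', hθc', hθ', hθn⟩ := h'
  refine ⟨θ + θ', hθc.add hθc', fun t ht => ?_, ?_⟩
  · simp only [sub_zero] at hθ hθ' ⊢
    calc (γ * γ') t = ‖γ t‖ * exp (θ t * I) * (‖γ' t‖ * exp (θ' t * I)) := by
          rw [Pi.mul_apply, ← hθ t ht, ← hθ' t ht]
      _ = _ := by
          rw [Pi.mul_apply, norm_mul, Pi.add_apply, ofReal_add, add_mul, Complex.exp_add]
          push_cast
          ring
  · simp only [Pi.add_apply]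
    push_cast
    linarith

end IsWindingNumber

theorem isWindingNumber_sub_const_iff {γ : ℝ → ℂ} {p : ℂ} {n : ℤ} :
    IsWindingNumber (fun t => γ t - p) 0 n ↔ IsWindingNumber γ p n := by
  simp only [IsWindingNumber, sub_zero]

theorem isWindingNumber_one : IsWindingNumber 1 0 0 :=
  ⟨0, continuousOn_const, fun t _ => by simp, by simp⟩

theorem IsWindingNumber.finset_prod {ι : Type*} {s : Finset ι} {γ : ι → ℝ → ℂ} {n : ι → ℤ}
    (h : ∀ i ∈ s, IsWindingNumber (γ i) 0 (n i)) :
    IsWindingNumber (∏ i ∈ s, γ i) 0 (∑ i ∈ s, n i) := by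
  classical
  induction s using Finset.induction_on with
  | empty => exact isWindingNumber_one
  | insert i s hi ih =>
    rw [Finset.prod_insert hi, Finset.sum_insert hi]
    exact (h i (Finset.mem_insert_self i s)).mul
      (ih fun j hj => h j (Finset.mem_insert_of_mem hj))

theorem isWindingNumber_exp {L : ℝ → ℂ} (hL : ContinuousOn L (Icc 0 1)) (h : L 0 = L 1) :
    IsWindingNumber (fun t => exp (L t)) 0 0 := by
  refine ⟨fun t => (L t).im, continuous_im.comp_continuousOn hL, fun t _ => ?_, by simp [h]⟩
  rw [sub_zero, norm_exp, ofReal_exp, ← Complex.exp_add, re_add_im]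

theorem exists_continuousOn_exp_eq {X : Type*} [TopologicalSpace X] {s : Set X}
    [SimplyConnectedSpace s] [LocallyPathConnectedSpace s] {g : X → ℂ} (hg : ContinuousOn g s)
    (hg₀ : ∀ x ∈ s, g x ≠ 0) : ∃ L : X → ℂ, ContinuousOn L s ∧ ∀ x ∈ s, exp (L x) = g x := by
  classical
  obtain ⟨x₀⟩ := (inferInstance : Nonempty s)
  obtain ⟨L, ⟨-, hL⟩, -⟩ := isCoveringMapOn_exp.existsUnique_continuousMap_lifts
    ⟨s.domRestrict g, continuousOn_iff_continuous_domRestrict.mp hg⟩ (exp_log (hg₀ x₀ x₀.2))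
    (fun x => hg₀ x x.2)
  refine ⟨fun x => if hx : x ∈ s then L ⟨x, hx⟩ else 0, ?_, fun x hx => ?_⟩
  · rw [continuousOn_iff_continuous_domRestrict]
    convert L.continuous with x
    simp
  · simpa [hx] using congrFun hL ⟨x, hx⟩

theorem exists_continuousOn_exp_eq_of_homeomorph_convex {X E : Type*} [TopologicalSpace X]
    [NormedAddCommGroup E] [NormedSpace ℝ E] {W : Set X} {K : Set E} (e : W ≃ₜ K)
    (hK : Convex ℝ K) (hK₀ : K.Nonempty) {g : X → ℂ} (hg : ContinuousOn g W)
    (hg₀ : ∀ x ∈ W, g x ≠ 0) : ∃ L : X → ℂ, ContinuousOn L W ∧ ∀ x ∈ W, exp (L x) = g x := by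
  have := hK.contractibleSpace hK₀
  have : SimplyConnectedSpace W := e.toHomotopyEquiv.simplyConnectedSpace
  have := hK.locallyPathConnectedSpace
  have : LocallyPathConnectedSpace W := e.symm.isQuotientMap.locallyPathConnectedSpace
  exact exists_continuousOn_exp_eq hg hg₀

theorem IsCompact.finite_inter_preimage_of_eventually_ne {X Y : Type*} [TopologicalSpace X]
    [TopologicalSpace Y] [T1Space Y] {K : Set X} (hK : IsCompact K) {F : X → Y}
    (hF : Continuous F) {y : Y} (hiso : ∀ x ∈ K, F x = y → ∀ᶠ z in 𝓝[≠] x, F z ≠ y) :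
    (K ∩ F ⁻¹' {y}).Finite := by
  refine (hK.inter_right (isClosed_singleton.preimage hF)).finite ?_
  refine isDiscrete_iff_nhdsNE.mpr fun x hx => inf_principal_eq_bot.mpr ?_
  filter_upwards [hiso x hx.1 hx.2] with z hz using fun hzK => hz hzK.2

namespace ContinuousLinearMap

-- For `A = Df(w)` these are the Wirtinger derivatives `∂f(w)` and `∂̄f(w)`.
noncomputable def complexLinearPart (A : ℂ →L[ℝ] ℂ) : ℂ := (A 1 - I * A I) / 2

noncomputable def conjLinearPart (A : ℂ →L[ℝ] ℂ) : ℂ := (A 1 + I * A I) / 2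

theorem apply_eq_complexLinearPart_mul_add (A : ℂ →L[ℝ] ℂ) (u : ℂ) :
    A u = A.complexLinearPart * u + A.conjLinearPart * conj u := by
  have hu : A u = u.re • A 1 + u.im • A I := by
    rw [← map_smul, ← map_smul, ← map_add, real_smul, real_smul, mul_one, re_add_im]
  rw [hu, complexLinearPart, conjLinearPart]
  apply Complex.ext <;> simp <;> ring

theorem det_eq_normSq_complexLinearPart_sub (A : ℂ →L[ℝ] ℂ) :
    A.det = normSq A.complexLinearPart - normSq A.conjLinearPart := by
  rw [ContinuousLinearMap.det, ← LinearMap.det_toMatrix basisOneI, Matrix.det_fin_two]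
  simp [LinearMap.toMatrix_apply, complexLinearPart, conjLinearPart, normSq_apply]
  ring

theorem norm_conjLinearPart_lt (A : ℂ →L[ℝ] ℂ) (hA : 0 < A.det) :
    ‖A.conjLinearPart‖ < ‖A.complexLinearPart‖ := by
  rw [det_eq_normSq_complexLinearPart_sub, ← Complex.sq_norm, ← Complex.sq_norm, sub_pos] at hA
  exact lt_of_pow_lt_pow_left₀ 2 (norm_nonneg _) hA

end ContinuousLinearMap

theorem re_pos_of_norm_sub_one_lt {q : ℂ} (h : ‖q - 1‖ < 1) : 0 < q.re := by
  have := (abs_re_le_norm (q - 1)).trans_lt h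
  rw [sub_re, one_re, abs_lt] at this
  linarith

theorem HasFDerivAt.eventually_re_div_complexLinearPart_pos {F : ℂ → ℂ} {A : ℂ →L[ℝ] ℂ}
    {w : ℂ} (hF : HasFDerivAt F A w) (hw : F w = 0) (hA : 0 < A.det) :
    ∀ᶠ z in 𝓝[≠] w, 0 < (F z / (A.complexLinearPart * (z - w))).re := by
  set a := A.complexLinearPart
  set b := A.conjLinearPart
  have hab := A.norm_conjLinearPart_lt hA
  have ha : a ≠ 0 := norm_pos_iff.mp ((norm_nonneg b).trans_lt hab)
  have hsmall := hF.isLittleO.def (c := (‖a‖ - ‖b‖) / 2) (by linarith)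
  filter_upwards [nhdsWithin_le_nhds hsmall, self_mem_nhdsWithin] with z hz hzw
  set v := z - w
  have hv : v ≠ 0 := sub_ne_zero.mpr hzw
  apply re_pos_of_norm_sub_one_lt
  have hquot : F z / (a * v) - 1 = (b * conj v + (F z - A v)) / (a * v) := by
    rw [A.apply_eq_complexLinearPart_mul_add]
    field_simp
    ring
  rw [hquot, norm_div, norm_mul, div_lt_one (by positivity)]
  rw [hw, sub_zero] at hz
  calc ‖b * conj v + (F z - A v)‖ ≤ ‖b‖ * ‖v‖ + (‖a‖ - ‖b‖) / 2 * ‖v‖ := by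
        refine (norm_add_le _ _).trans (add_le_add ?_ hz)
        rw [norm_mul, norm_conj]
    _ < ‖a‖ * ‖v‖ := by nlinarith [norm_pos_iff.mpr hv]

/-- Dividing `F` by this factor instead of by `z - w` leaves a quotient that extends
continuously across `w`. -/
noncomputable def localFactor (F : ℂ → ℂ) (a : ℂ) {w : ℂ} (φ : ContDiffBump w) (z : ℂ) : ℂ :=
  φ z * (F z / a) + (1 - φ z) * (z - w)

section LocalFactor

variable {F : ℂ → ℂ} {a w z : ℂ} (φ : ContDiffBump w)

theorem continuous_localFactor (hF : Continuous F) : Continuous (localFactor F a φ) :=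
  ((continuous_ofReal.comp φ.continuous).mul (hF.div_const a)).add
    ((continuous_const.sub (continuous_ofReal.comp φ.continuous)).mul
      (continuous_id.sub continuous_const))

theorem localFactor_of_rOut_le_dist (h : φ.rOut ≤ dist z w) : localFactor F a φ z = z - w := by
  simp [localFactor, φ.zero_of_le_dist h]

theorem localFactor_eventuallyEq : localFactor F a φ =ᶠ[𝓝 w] fun z => F z / a := by
  filter_upwards [φ.eventuallyEq_one] with z hz
  simp [localFactor, hz]

theorem localFactor_ne_zero (hre : ∀ z ∈ ball w φ.rOut, z ≠ w → 0 < (F z / (a * (z - w))).re)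
    (hz : z ≠ w) : localFactor F a φ z ≠ 0 := by
  by_cases hd : φ.rOut ≤ dist z w
  · rw [localFactor_of_rOut_le_dist φ hd]
    exact sub_ne_zero.mpr hz
  have hq := hre z (mem_ball.mpr (not_le.mp hd)) hz
  have hv : z - w ≠ 0 := sub_ne_zero.mpr hz
  have ha : a ≠ 0 := by
    rintro rfl
    simp at hq
  have hfac : localFactor F a φ z = (z - w) * (φ z * (F z / (a * (z - w))) + (1 - φ z)) := by
    rw [localFactor]
    field_simp
  rw [hfac]
  refine mul_ne_zero hv fun h => ?_
  have := congrArg re h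
  simp only [add_re, re_ofReal_mul, sub_re, one_re, ofReal_re, zero_re] at this
  rcases (φ.le_one (x := z)).lt_or_eq with hφ | hφ
  · nlinarith [mul_nonneg (φ.nonneg (x := z)) hq.le]
  · rw [hφ] at this
    linarith

end LocalFactor

/-- The values on `T` are the limits there, which removes the singularities of the quotient. -/
noncomputable def divLocalFactors (F : ℂ → ℂ) (T : Finset ℂ) (a : ℂ → ℂ)
    (φ : ∀ w : ℂ, ContDiffBump w) (z : ℂ) : ℂ :=
  open Classical in
  if z ∈ T then a z / ∏ w ∈ T.erase z, localFactor F (a w) (φ w) z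
  else F z / ∏ w ∈ T, localFactor F (a w) (φ w) z

section DivLocalFactors

variable {F : ℂ → ℂ} {T : Finset ℂ} {a : ℂ → ℂ} {φ : ∀ w : ℂ, ContDiffBump w} {z : ℂ}
  (hre : ∀ w ∈ T, ∀ z ∈ ball w (φ w).rOut, z ≠ w → 0 < (F z / (a w * (z - w))).re)
include hre

theorem prod_localFactor_ne_zero {s : Finset ℂ} (hs : s ⊆ T) (hz : z ∉ s) :
    ∏ w ∈ s, localFactor F (a w) (φ w) z ≠ 0 :=
  Finset.prod_ne_zero_iff.mpr fun w hw =>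
    localFactor_ne_zero (φ w) (hre w (hs hw)) fun h => hz (h ▸ hw)

theorem continuous_divLocalFactors (hF : Continuous F) (ha : ∀ w ∈ T, a w ≠ 0) :
    Continuous (divLocalFactors F T a φ) := by
  have hprod (s : Finset ℂ) : Continuous fun x => ∏ w ∈ s, localFactor F (a w) (φ w) x :=
    continuous_finsetProd s fun w _ => continuous_localFactor (φ w) hF
  refine continuous_iff_continuousAt.mpr fun z => ?_
  have hnotMem (s : Finset ℂ) (hz : z ∉ s) : ∀ᶠ x in 𝓝 z, x ∉ s :=
    s.finite_toSet.isClosed.isOpen_compl.mem_nhds hz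
  by_cases hz : z ∈ T
  · refine ((continuousAt_const (y := a z)).div (hprod _).continuousAt
      (prod_localFactor_ne_zero hre (T.erase_subset z) (T.notMem_erase z))).congr ?_
    filter_upwards [hnotMem _ (T.notMem_erase z), ball_mem_nhds z (φ z).rOut_pos,
      localFactor_eventuallyEq (φ z)] with x hxT hxb hx
    rw [Pi.div_apply]
    by_cases hxz : x = z
    · subst hxz
      simp [divLocalFactors, hz]
    have hxT' : x ∉ T := fun h => hxT (Finset.mem_erase.mpr ⟨hxz, h⟩)
    have hFx : F x ≠ 0 := by
      intro h
      simpa [h] using hre z hz x hxb hxz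
    rw [divLocalFactors, if_neg hxT', ← Finset.mul_prod_erase T _ hz, hx]
    field_simp [ha z hz]
  · refine (hF.continuousAt.div (hprod T).continuousAt
      (prod_localFactor_ne_zero hre subset_rfl hz)).congr ?_
    filter_upwards [hnotMem T hz] with x hx
    simp [divLocalFactors, hx]

theorem divLocalFactors_ne_zero (ha : ∀ w ∈ T, a w ≠ 0) (hz : z ∈ T ∨ F z ≠ 0) :
    divLocalFactors F T a φ z ≠ 0 := by
  by_cases hzT : z ∈ T
  · rw [divLocalFactors, if_pos hzT]
    exact div_ne_zero (ha z hzT)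
      (prod_localFactor_ne_zero hre (T.erase_subset z) (T.notMem_erase z))
  · rw [divLocalFactors, if_neg hzT]
    exact div_ne_zero (hz.resolve_left hzT) (prod_localFactor_ne_zero hre subset_rfl hzT)

theorem eq_divLocalFactors_mul_prod (hz : ∀ w ∈ T, (φ w).rOut ≤ dist z w) :
    F z = divLocalFactors F T a φ z * ∏ w ∈ T, (z - w) := by
  have hzT : z ∉ T := fun h => by simpa using (φ z).rOut_pos.trans_le (hz z h)
  have hprod : ∏ w ∈ T, localFactor F (a w) (φ w) z = ∏ w ∈ T, (z - w) :=
    Finset.prod_congr rfl fun w hw => localFactor_of_rOut_le_dist (φ w) (hz w hw)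
  rw [divLocalFactors, if_neg hzT, ← hprod,
    div_mul_cancel₀ _ (prod_localFactor_ne_zero hre subset_rfl hzT)]

end DivLocalFactors

theorem exists_continuous_eq_mul_prod_sub {F : ℂ → ℂ} (hF : Continuous F) {T : Finset ℂ}
    {a : ℂ → ℂ} (hre : ∀ w ∈ T, ∀ᶠ z in 𝓝[≠] w, 0 < (F z / (a w * (z - w))).re) {U : Set ℂ}
    (hU : IsOpen U) (hTU : ∀ w ∈ T, w ∈ U) :
    ∃ G : ℂ → ℂ, Continuous G ∧ (∀ z, z ∈ T ∨ F z ≠ 0 → G z ≠ 0) ∧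
      ∀ z ∉ U, F z = G z * ∏ w ∈ T, (z - w) := by
  have ha (w : ℂ) (hw : w ∈ T) : a w ≠ 0 := by
    obtain ⟨z, hz⟩ := (hre w hw).exists
    rintro h
    simp [h] at hz
  have hbump (w : ℂ) : ∃ φ : ContDiffBump w, w ∈ T → ball w φ.rOut ⊆ U ∧
      ∀ z ∈ ball w φ.rOut, z ≠ w → 0 < (F z / (a w * (z - w))).re := by
    by_cases hw : w ∈ T
    · obtain ⟨r, hr, hrU⟩ := Metric.mem_nhds_iff.mp
        (inter_mem (hU.mem_nhds (hTU w hw)) (eventually_nhdsWithin_iff.mp (hre w hw)))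
      exact ⟨⟨r / 2, r, half_pos hr, half_lt_self hr⟩, fun _ =>
        ⟨fun z hz => (hrU hz).1, fun z hz hzw => (hrU hz).2 hzw⟩⟩
    · exact ⟨default, fun h => (hw h).elim⟩
  choose φ hφ using hbump
  have hre' (w : ℂ) (hw : w ∈ T) := (hφ w hw).2
  refine ⟨divLocalFactors F T a φ, continuous_divLocalFactors hre' hF ha,
    fun z hz => divLocalFactors_ne_zero hre' ha hz, fun z hz => ?_⟩
  exact eq_divLocalFactors_mul_prod hre' fun w hw =>
    not_lt.mp fun h => hz ((hφ w hw).1 (mem_ball.mpr h))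

/-- Let `f` be C¹ on `W` homeomorphic to the closed disk `D²`, with `det J_f > 0` on `W`.
Let `b` be a (counterclockwise) loop parametrizing `∂W`: it traverses `frontier W` and winds
once around every interior point of `W`. Then for every point `p ∉ f(∂W)`, the number of
preimages of `p` in `W` is finite and equals the winding number of the cycle `f(∂W)`
around `p`. -/
theorem card_preimage_eq_windingNumber (W : Set ℂ)
    (hhomeo : Nonempty (W ≃ₜ (closedBall (0:ℂ) 1)))
    (b : ℝ → ℂ) (hb : ContinuousOn b (Set.Icc 0 1)) (hbloop : b 0 = b 1)
    (hbim : b '' Set.Icc 0 1 = frontier W)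
    (hborient : ∀ q ∈ W \ frontier W, IsWindingNumber b q 1)
    (f : ℂ → ℂ) (hf : ContDiff ℝ 1 f)
    (hdet : ∀ w ∈ W, 0 < (fderiv ℝ f w).det)
    (p : ℂ) (hp : p ∉ f '' frontier W) :
    ∃ hfin : (W ∩ f ⁻¹' {p}).Finite,
      IsWindingNumber (fun t => f (b t)) p (hfin.toFinset.card : ℤ) := by
  obtain ⟨e⟩ := hhomeo
  have hW : IsCompact W := isCompact_iff_compactSpace.mpr e.symm.compactSpace
  have hint (w : ℂ) (hw : w ∈ W ∩ f ⁻¹' {p}) : w ∈ W \ frontier W :=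
    ⟨hw.1, fun h => hp ⟨w, h, hw.2⟩⟩
  have hre (w : ℂ) (hw : w ∈ W ∩ f ⁻¹' {p}) :
      ∀ᶠ z in 𝓝[≠] w, 0 < ((f z - p) / ((fderiv ℝ f w).complexLinearPart * (z - w))).re :=
    HasFDerivAt.eventually_re_div_complexLinearPart_pos
      ((hf.differentiable one_ne_zero w).hasFDerivAt.sub_const p) (sub_eq_zero.mpr hw.2)
      (hdet w hw.1)
  have hfin : (W ∩ f ⁻¹' {p}).Finite :=
    hW.finite_inter_preimage_of_eventually_ne hf.continuous fun w hw hfw => by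
      filter_upwards [hre w ⟨hw, hfw⟩] with z hz hfz
      simp [hfz] at hz
  refine ⟨hfin, ?_⟩
  obtain ⟨G, hGc, hG0, hfG⟩ := exists_continuous_eq_mul_prod_sub (F := fun z => f z - p)
    (hf.continuous.sub continuous_const) (fun w hw => hre w (hfin.mem_toFinset.mp hw))
    isOpen_interior fun w hw => self_sdiff_frontier W ▸ hint w (hfin.mem_toFinset.mp hw)
  obtain ⟨Λ, hΛc, hΛ⟩ := exists_continuousOn_exp_eq_of_homeomorph_convex e
    (convex_closedBall 0 1) ⟨0, mem_closedBall_self zero_le_one⟩ hGc.continuousOn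
    fun z hz => hG0 z <| or_iff_not_imp_right.mpr fun h =>
      hfin.mem_toFinset.mpr ⟨hz, by simpa [sub_eq_zero] using h⟩
  have hbfr : MapsTo b (Icc 0 1) (frontier W) := hbim ▸ mapsTo_image b _
  have hbW : MapsTo b (Icc 0 1) W := hbfr.mono_right hW.isClosed.frontier_subset
  have hwind := (isWindingNumber_exp (hΛc.comp hb hbW) (congrArg Λ hbloop)).mul
    (IsWindingNumber.finset_prod fun w hw =>
      isWindingNumber_sub_const_iff.mpr (hborient w (hint w (hfin.mem_toFinset.mp hw))))
  rw [← isWindingNumber_sub_const_iff]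
  convert hwind.congr fun t ht => ?_ using 1
  · simp
  · simp only [Pi.mul_apply, Finset.prod_apply, Function.comp_apply, hΛ (b t) (hbW ht)]
    exact (hfG (b t) fun h => (self_sdiff_frontier W ▸ h).2 (hbfr ht)).symm
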